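/- arXiv:2402.14979 — 5 statements merged into one kernel-verified Lean document; each statement's English description precedes it below -/
import Mathlib

section
/- Let 𝒳 be a finite set, let P^f and P^R be probability distributions on 𝒳 such that P^f satisfies overlap with respect to P^R, and let g : 𝒳 → ℝ. Let (Ω, μ) be a probability space, X : Ω → 𝒳 a random variable with law P^R, and Y : Ω → ℝ integrable with ∫ Y·1{X = x} dμ = g(x)·P^R(x) for all x ∈ 𝒳. Then ∫ (P^f(X)/P^R(X))·(Y − g(X)) dμ + ∑_{x∈𝒳} P^f(x)·g(x) = V(f), i.e., the doubly robust expression V_DR = E_{X∼P^R}E_Y[(P^f(X)/P^R(X))(Y − g(X))] + E_{X∼P^f}[g(X)] identifies the value function. (Proposition 2: doubly robust identification of the value function.) -/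
/-! The residual `Y - g(X)` integrates to zero over every fiber `{X = x}`: there the integral
of `Y` is `g x · P^R(x)` and that of `g(X)` is `g x · μ{X = x} = g x · P^R(x)`. The weight
`P^f(X)/P^R(X)` is constant on each fiber, so the correction term of `V_DR` is a sum of zeros. -/

namespace MeasureTheory

variable {Ω 𝒳 : Type*} [MeasurableSpace Ω] {μ : Measure Ω}
  [MeasurableSpace 𝒳] [MeasurableSingletonClass 𝒳] {X : Ω → 𝒳}

lemma integrable_comp_of_fintype [Fintype 𝒳] [IsFiniteMeasure μ] (hX : Measurable X)
    (w : 𝒳 → ℝ) : Integrable (fun ω ↦ w (X ω)) μ :=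
  .of_bound (measurable_of_countable w |>.comp hX).aestronglyMeasurable ‖w‖
    (ae_of_all _ fun ω ↦ norm_le_pi_norm w (X ω))

lemma Integrable.comp_mul_of_fintype [Fintype 𝒳] {F : Ω → ℝ} (hF : Integrable F μ)
    (hX : Measurable X) (w : 𝒳 → ℝ) : Integrable (fun ω ↦ w (X ω) * F ω) μ :=
  hF.bdd_mul (measurable_of_countable w |>.comp hX).aestronglyMeasurable
    (ae_of_all _ fun ω ↦ norm_le_pi_norm w (X ω))

lemma integral_eq_sum_setIntegral_fiber [Fintype 𝒳] {F : Ω → ℝ} (hF : Integrable F μ)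
    (hX : Measurable X) :
    ∫ ω, F ω ∂μ = ∑ x, ∫ ω in X ⁻¹' {x}, F ω ∂μ := by
  rw [← integral_iUnion_fintype (fun x ↦ hX (measurableSet_singleton x))
    (pairwise_disjoint_fiber X) fun _ ↦ hF.integrableOn, ← Set.preimage_iUnion,
    Set.iUnion_of_singleton, Set.preimage_univ, setIntegral_univ]

lemma setIntegral_fiber_comp_mul_sub [IsFiniteMeasure μ] {Y : Ω → ℝ} (hY : Integrable Y μ)
    (hX : Measurable X) (w g : 𝒳 → ℝ) (x : 𝒳) :
    ∫ ω in X ⁻¹' {x}, w (X ω) * (Y ω - g (X ω)) ∂μ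
      = w x * (∫ ω in X ⁻¹' {x}, Y ω ∂μ - g x * μ.real (X ⁻¹' {x})) := by
  have hfiber : ∫ ω in X ⁻¹' {x}, w (X ω) * (Y ω - g (X ω)) ∂μ
      = ∫ ω in X ⁻¹' {x}, w x * (Y ω - g x) ∂μ :=
    setIntegral_congr_fun (hX (measurableSet_singleton x)) fun ω (hω : X ω = x) ↦ by rw [hω]
  rw [hfiber, integral_const_mul,
    integral_sub hY.integrableOn (integrableOn_const (measure_ne_top _ _)), setIntegral_const,
    smul_eq_mul, mul_comm (μ.real _)]

theorem integral_comp_mul_sub_eq_zero [Fintype 𝒳] [IsFiniteMeasure μ] {Y : Ω → ℝ}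
    (hY : Integrable Y μ) (hX : Measurable X) {g : 𝒳 → ℝ}
    (hcond : ∀ x, ∫ ω in X ⁻¹' {x}, Y ω ∂μ = g x * μ.real (X ⁻¹' {x})) (w : 𝒳 → ℝ) :
    ∫ ω, w (X ω) * (Y ω - g (X ω)) ∂μ = 0 := by
  have hres : Integrable (fun ω ↦ Y ω - g (X ω)) μ := hY.sub (integrable_comp_of_fintype hX g)
  rw [integral_eq_sum_setIntegral_fiber (hres.comp_mul_of_fintype hX w) hX]
  exact Finset.sum_eq_zero fun x _ ↦ by
    rw [setIntegral_fiber_comp_mul_sub hY hX, hcond, sub_self, mul_zero]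

end MeasureTheory

open MeasureTheory

theorem dr_identification_general {𝒳 : Type*} [Fintype 𝒳]
    [MeasurableSpace 𝒳] [MeasurableSingletonClass 𝒳]
    (Pf PR : 𝒳 → ℝ)
    (g : 𝒳 → ℝ)
    {Ω : Type*} [MeasurableSpace Ω] (μ : Measure Ω) [IsProbabilityMeasure μ]
    (X : Ω → 𝒳) (hX : Measurable X)
    (hlaw : ∀ x, (μ {ω | X ω = x}).toReal = PR x)
    (Y : Ω → ℝ) (hY : Integrable Y μ)
    (hcond : ∀ x, ∫ ω in {ω | X ω = x}, Y ω ∂μ = g x * PR x) :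
    (∫ ω, (Pf (X ω) / PR (X ω)) * (Y ω - g (X ω)) ∂μ) + ∑ x, Pf x * g x
      = ∑ x, Pf x * g x := by
  have hcond' : ∀ x, ∫ ω in X ⁻¹' {x}, Y ω ∂μ = g x * μ.real (X ⁻¹' {x}) := fun x ↦ by
    change _ = g x * (μ {ω | X ω = x}).toReal
    rw [hlaw x]
    exact hcond x
  rw [integral_comp_mul_sub_eq_zero hY hX hcond' (fun x ↦ Pf x / PR x), zero_add]

/-- **Proposition 2.** Doubly robust identification of the value function:
`E_{X∼PR,Y}[(Pf(X)/PR(X))(Y − g(X))] + E_{X∼Pf}[g(X)] = V(f)`. -/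
theorem dr_identification {𝒳 : Type*} [Fintype 𝒳]
    [MeasurableSpace 𝒳] [MeasurableSingletonClass 𝒳]
    (Pf PR : 𝒳 → ℝ)
    (hPf_nonneg : ∀ x, 0 ≤ Pf x) (hPf_sum : ∑ x, Pf x = 1)
    (hPR_nonneg : ∀ x, 0 ≤ PR x) (hPR_sum : ∑ x, PR x = 1)
    (h_overlap : ∀ x, PR x = 0 → Pf x = 0)
    (g : 𝒳 → ℝ)
    {Ω : Type*} [MeasurableSpace Ω] (μ : Measure Ω) [IsProbabilityMeasure μ]
    (X : Ω → 𝒳) (hX : Measurable X)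
    (hlaw : ∀ x, (μ {ω | X ω = x}).toReal = PR x)
    (Y : Ω → ℝ) (hY : Integrable Y μ)
    (hcond : ∀ x, ∫ ω in {ω | X ω = x}, Y ω ∂μ = g x * PR x) :
    (∫ ω, (Pf (X ω) / PR (X ω)) * (Y ω - g (X ω)) ∂μ) + ∑ x, Pf x * g x
      = ∑ x, Pf x * g x :=
  dr_identification_general Pf PR g μ X hX hlaw Y hY hcond
end

section
/- Let 𝒳 be a finite set; let P^f, P^R, and P^{f⁰} be probability distributions on 𝒳 such that P^f satisfies overlap with respect to both P^R and P^{f⁰}; let g : 𝒳 → ℝ and let ĝ : 𝒳 → ℝ be an arbitrary function. Let (Ω, μ) be a probability space; for i = 1,…,n let X_i : Ω → 𝒳 have law P^R and Y_i : Ω → ℝ be integrable with ∫ Y_i·1{X_i = x} dμ = g(x)·P^R(x) for all x; for j = 1,…,m let X̃_j : Ω → 𝒳 have law P^{f⁰}. Then the doubly robust estimator V̂_DR = (1/n) ∑_{i=1}^n (P^f(X_i)/P^R(X_i))·(Y_i − ĝ(X_i)) + (1/m) ∑_{j=1}^m (P^f(X̃_j)/P^{f⁰}(X̃_j))·ĝ(X̃_j)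 satisfies ∫ V̂_DR dμ = ∑_{x∈𝒳} P^f(x)·g(x) = V(f). (Theorem 2, case 1: unbiasedness of DR-CPO when the randomization distribution P^R is correctly specified, regardless of whether the outcome model ĝ is correct.) -/
/-!
Split the integral along the finitely many fibres `{X = x}`. On a fibre the weight
`Pf(X) / PR(X)` is the constant `Pf x / PR x`, and the conditional-mean hypothesis makes the
fibre integral of `Y - ĝ(X)` equal to `(g x - ĝ x) * PR x`; the density `PR x` cancels
against the weight, also where it vanishes thanks to overlap. Hence each importance-sampling
term has mean `∑ Pf (g - ĝ)` and, in the same way, each direct-method term has mean `∑ Pf ĝ`: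
the outcome model `ĝ` cancels between the two averages.
-/

open MeasureTheory Finset

section Fibres

variable {𝒳 Ω : Type*} [MeasurableSpace 𝒳] [MeasurableSingletonClass 𝒳]
  [MeasurableSpace Ω] {μ : Measure Ω} {X : Ω → 𝒳}

lemma integral_eq_sum_setIntegral_fiber [Fintype 𝒳] (hX : Measurable X) {F : Ω → ℝ}
    (hF : Integrable F μ) : ∫ ω, F ω ∂μ = ∑ x, ∫ ω in {ω | X ω = x}, F ω ∂μ := by
  have hcover : (⋃ x, X ⁻¹' {x}) = Set.univ := by ext; simp
  rw [← setIntegral_univ, ← hcover, integral_iUnion_fintype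
    (fun x => hX (measurableSet_singleton x)) (pairwise_disjoint_fiber X)
    (fun _ => hF.integrableOn)]
  rfl

lemma MeasureTheory.Integrable.comp_fintype_mul [Fintype 𝒳] (hX : Measurable X) {Z : Ω → ℝ}
    (hZ : Integrable Z μ) (h : 𝒳 → ℝ) : Integrable (fun ω => h (X ω) * Z ω) μ :=
  hZ.bdd_mul ((measurable_of_countable h).comp hX).aestronglyMeasurable
    (.of_forall fun ω => single_le_sum (fun x _ => norm_nonneg (h x)) (mem_univ (X ω)))

lemma integral_comp_mul_eq_sum [Fintype 𝒳] (hX : Measurable X) {Z : Ω → ℝ}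
    (hZ : Integrable Z μ) (h : 𝒳 → ℝ) :
    ∫ ω, h (X ω) * Z ω ∂μ = ∑ x, h x * ∫ ω in {ω | X ω = x}, Z ω ∂μ := by
  rw [integral_eq_sum_setIntegral_fiber hX (hZ.comp_fintype_mul hX h)]
  refine sum_congr rfl fun x _ => ?_
  rw [← integral_const_mul]
  exact setIntegral_congr_fun (hX (measurableSet_singleton x)) fun ω hω => by rw [hω.out]

lemma setIntegral_fiber_comp (hX : Measurable X) (h : 𝒳 → ℝ) (x : 𝒳) :
    ∫ ω in {ω | X ω = x}, h (X ω) ∂μ = h x * μ.real {ω | X ω = x} := by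
  calc ∫ ω in {ω | X ω = x}, h (X ω) ∂μ = ∫ _ in {ω | X ω = x}, h x ∂μ :=
        setIntegral_congr_fun (hX (measurableSet_singleton x)) fun ω hω => by rw [hω.out]
    _ = h x * μ.real {ω | X ω = x} := by rw [setIntegral_const, smul_eq_mul, mul_comm]

lemma integral_div_comp_mul_eq_sum [Fintype 𝒳] (hX : Measurable X) {Z : Ω → ℝ}
    (hZ : Integrable Z μ) {p q r : 𝒳 → ℝ}
    (hcond : ∀ x, ∫ ω in {ω | X ω = x}, Z ω ∂μ = r x * q x)
    (hoverlap : ∀ x, q x = 0 → p x = 0) :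
    ∫ ω, p (X ω) / q (X ω) * Z ω ∂μ = ∑ x, p x * r x := by
  rw [integral_comp_mul_eq_sum hX hZ (fun x => p x / q x)]
  refine sum_congr rfl fun x _ => ?_
  rw [hcond, mul_comm (r x), ← mul_assoc, div_mul_cancel_of_imp (hoverlap x)]

end Fibres

lemma integral_average_eq {Ω : Type*} [MeasurableSpace Ω] {μ : Measure Ω} {n : ℕ}
    (hn : 0 < n) {F : Fin n → Ω → ℝ} (hF : ∀ i, Integrable (F i) μ) {c : ℝ}
    (hc : ∀ i, ∫ ω, F i ω ∂μ = c) : ∫ ω, 1 / (n : ℝ) * ∑ i, F i ω ∂μ = c := by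
  rw [integral_const_mul, integral_finsetSum _ fun i _ => hF i]
  simp only [hc, sum_const, card_univ, Fintype.card_fin, nsmul_eq_mul]
  field_simp

theorem dr_cpo_unbiased_known_PR_general {𝒳 : Type*} [Fintype 𝒳]
    [MeasurableSpace 𝒳] [MeasurableSingletonClass 𝒳]
    (Pf PR Pf0 : 𝒳 → ℝ)
    (h_overlap_R : ∀ x, PR x = 0 → Pf x = 0)
    (h_overlap_0 : ∀ x, Pf0 x = 0 → Pf x = 0)
    (g ghat : 𝒳 → ℝ)
    {Ω : Type*} [MeasurableSpace Ω] (μ : Measure Ω) [IsProbabilityMeasure μ]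
    (n m : ℕ) (hn : 0 < n) (hm : 0 < m)
    (X : Fin n → Ω → 𝒳) (hX : ∀ i, Measurable (X i))
    (hlaw : ∀ i x, (μ {ω | X i ω = x}).toReal = PR x)
    (Y : Fin n → Ω → ℝ) (hY : ∀ i, Integrable (Y i) μ)
    (hcond : ∀ i x, ∫ ω in {ω | X i ω = x}, Y i ω ∂μ = g x * PR x)
    (Xt : Fin m → Ω → 𝒳) (hXt : ∀ j, Measurable (Xt j))
    (hlawt : ∀ j x, (μ {ω | Xt j ω = x}).toReal = Pf0 x) :
    ∫ ω, ((1 / (n : ℝ)) * ∑ i, (Pf (X i ω) / PR (X i ω)) * (Y i ω - ghat (X i ω))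
        + (1 / (m : ℝ)) * ∑ j, (Pf (Xt j ω) / Pf0 (Xt j ω)) * ghat (Xt j ω)) ∂μ
      = ∑ x, Pf x * g x := by
  have hghat : ∀ {Z : Ω → 𝒳}, Measurable Z → Integrable (fun ω => ghat (Z ω)) μ :=
    fun hZ => (Integrable.of_finite (μ := μ.map _)).comp_measurable hZ
  have hresid : ∀ i, Integrable (fun ω => Y i ω - ghat (X i ω)) μ :=
    fun i => (hY i).sub (hghat (hX i))
  have hIS : ∀ i, ∫ ω, Pf (X i ω) / PR (X i ω) * (Y i ω - ghat (X i ω)) ∂μ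
      = ∑ x, Pf x * (g x - ghat x) := fun i =>
    integral_div_comp_mul_eq_sum (hX i) (hresid i) (fun x => by
      rw [integral_sub (hY i).integrableOn (hghat (hX i)).integrableOn, hcond,
        setIntegral_fiber_comp (hX i), measureReal_def, hlaw, sub_mul]) h_overlap_R
  have hDM : ∀ j, ∫ ω, Pf (Xt j ω) / Pf0 (Xt j ω) * ghat (Xt j ω) ∂μ
      = ∑ x, Pf x * ghat x :=
    fun j => integral_div_comp_mul_eq_sum (hXt j) (hghat (hXt j)) (fun x => by
      rw [setIntegral_fiber_comp (hXt j), measureReal_def, hlawt]) h_overlap_0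
  have hIS_int : ∀ i, Integrable
      (fun ω => Pf (X i ω) / PR (X i ω) * (Y i ω - ghat (X i ω))) μ :=
    fun i => (hresid i).comp_fintype_mul (hX i) fun x => Pf x / PR x
  have hDM_int : ∀ j, Integrable (fun ω => Pf (Xt j ω) / Pf0 (Xt j ω) * ghat (Xt j ω)) μ :=
    fun j => (hghat (hXt j)).comp_fintype_mul (hXt j) fun x => Pf x / Pf0 x
  rw [integral_add ((integrable_finsetSum _ fun i _ => hIS_int i).const_mul _)
      ((integrable_finsetSum _ fun j _ => hDM_int j).const_mul _),
    integral_average_eq hn hIS_int hIS, integral_average_eq hm hDM_int hDM, ← sum_add_distrib]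
  exact sum_congr rfl fun x _ => by ring

/-- **Theorem 2, case 1.** Unbiasedness of the DR-CPO estimator when the randomization
distribution `PR` is correctly specified, regardless of whether the outcome model `ĝ`
is correct:
`∫ [(1/n) ∑ i, (Pf(Xᵢ)/PR(Xᵢ))(Yᵢ − ĝ(Xᵢ)) + (1/m) ∑ j, (Pf(X̃ⱼ)/Pf0(X̃ⱼ)) ĝ(X̃ⱼ)] dμ
  = ∑ x, Pf x * g x = V(f)`. -/
theorem dr_cpo_unbiased_known_PR {𝒳 : Type*} [Fintype 𝒳]
    [MeasurableSpace 𝒳] [MeasurableSingletonClass 𝒳]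
    (Pf PR Pf0 : 𝒳 → ℝ)
    (hPf_nonneg : ∀ x, 0 ≤ Pf x) (hPf_sum : ∑ x, Pf x = 1)
    (hPR_nonneg : ∀ x, 0 ≤ PR x) (hPR_sum : ∑ x, PR x = 1)
    (hPf0_nonneg : ∀ x, 0 ≤ Pf0 x) (hPf0_sum : ∑ x, Pf0 x = 1)
    (h_overlap_R : ∀ x, PR x = 0 → Pf x = 0)
    (h_overlap_0 : ∀ x, Pf0 x = 0 → Pf x = 0)
    (g ghat : 𝒳 → ℝ)
    {Ω : Type*} [MeasurableSpace Ω] (μ : Measure Ω) [IsProbabilityMeasure μ]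
    (n m : ℕ) (hn : 0 < n) (hm : 0 < m)
    (X : Fin n → Ω → 𝒳) (hX : ∀ i, Measurable (X i))
    (hlaw : ∀ i x, (μ {ω | X i ω = x}).toReal = PR x)
    (Y : Fin n → Ω → ℝ) (hY : ∀ i, Integrable (Y i) μ)
    (hcond : ∀ i x, ∫ ω in {ω | X i ω = x}, Y i ω ∂μ = g x * PR x)
    (Xt : Fin m → Ω → 𝒳) (hXt : ∀ j, Measurable (Xt j))
    (hlawt : ∀ j x, (μ {ω | Xt j ω = x}).toReal = Pf0 x) :
    ∫ ω, ((1 / (n : ℝ)) * ∑ i, (Pf (X i ω) / PR (X i ω)) * (Y i ω - ghat (X i ω))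
        + (1 / (m : ℝ)) * ∑ j, (Pf (Xt j ω) / Pf0 (Xt j ω)) * ghat (Xt j ω)) ∂μ
      = ∑ x, Pf x * g x :=
  dr_cpo_unbiased_known_PR_general Pf PR Pf0 h_overlap_R h_overlap_0 g ghat μ n m hn hm X hX hlaw Y
    hY hcond Xt hXt hlawt
end

section
/- Let 𝒳 be a finite set, let P^R be a probability distribution on 𝒳, let P^f : 𝒳 → ℝ and g : 𝒳 → ℝ be functions, and let P̂^R : 𝒳 → ℝ satisfy P̂^R(x) > 0 for all x. Let (Ω, μ) be a probability space, X : Ω → 𝒳 a random variable with law P^R, and Y : Ω → ℝ integrable with ∫ Y·1{X = x} dμ = g(x)·P^R(x) for all x ∈ 𝒳. Then ∫ (P^f(X)/P̂^R(X))·(Y − g(X)) dμ = 0. (Key step in the proof of Theorem 2, case 2: when the outcome model is the true conditional mean, the bias-correction term vanishes in expectation for any positive weighting function.) -/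
open MeasureTheory Finset

/-!
Splitting `Ω` along the finitely many fibres `{X = x}`, the weight `Pf / PRhat` is the constant
`Pf x / PRhat x` on each fibre, so the integral is `∑ₓ (Pf x / PRhat x) ∫_{X = x} (Y - g x) dμ`.
Each fibre integral is `g x * PR x - g x * μ {X = x} = 0`, because `X` has law `PR` and
`g` is the conditional mean of `Y`.
-/

section FiniteFibres

variable {α Ω : Type*} {X : Ω → α}

theorem mul_eq_sum_indicator_fibre [Fintype α] (φ : α → ℝ) (Z : Ω → ℝ) (ω : Ω) :
    φ (X ω) * Z ω = ∑ x, {ω | X ω = x}.indicator (fun ω => φ x * Z ω) ω := by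
  classical
  simp only [Set.indicator_apply, Set.mem_ofPred_eq, Finset.sum_ite_eq, Finset.mem_univ,
    if_true]

variable [MeasurableSpace α] [MeasurableSingletonClass α] [MeasurableSpace Ω] {μ : Measure Ω}

theorem integral_comp_mul_eq_sum_setIntegral [Fintype α] (hX : Measurable X) (φ : α → ℝ)
    {Z : Ω → ℝ} (hZ : Integrable Z μ) :
    ∫ ω, φ (X ω) * Z ω ∂μ = ∑ x, φ x * ∫ ω in {ω | X ω = x}, Z ω ∂μ := by
  have hfibre (x : α) : MeasurableSet {ω | X ω = x} := hX (measurableSet_singleton x)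
  simp_rw [mul_eq_sum_indicator_fibre φ Z]
  rw [integral_finsetSum _ fun x _ => (hZ.const_mul (φ x)).indicator (hfibre x)]
  refine Finset.sum_congr rfl fun x _ => ?_
  rw [integral_indicator (hfibre x), integral_const_mul]

theorem setIntegral_sub_comp_fibre [IsFiniteMeasure μ] (hX : Measurable X) (g : α → ℝ)
    {Y : Ω → ℝ} (hY : Integrable Y μ) (x : α) :
    ∫ ω in {ω | X ω = x}, (Y ω - g (X ω)) ∂μ
      = ∫ ω in {ω | X ω = x}, Y ω ∂μ - g x * μ.real {ω | X ω = x} := by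
  have hfibre : MeasurableSet {ω | X ω = x} := hX (measurableSet_singleton x)
  rw [setIntegral_congr_fun hfibre fun ω (hω : X ω = x) => by rw [hω],
    integral_sub hY.restrict (integrable_const _), setIntegral_const, smul_eq_mul, mul_comm]

end FiniteFibres

theorem bias_correction_vanishes_general {𝒳 : Type*} [Fintype 𝒳]
    [MeasurableSpace 𝒳] [MeasurableSingletonClass 𝒳]
    (PR : 𝒳 → ℝ)
    (Pf g : 𝒳 → ℝ)
    (PRhat : 𝒳 → ℝ)
    {Ω : Type*} [MeasurableSpace Ω] (μ : Measure Ω) [IsProbabilityMeasure μ]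
    (X : Ω → 𝒳) (hX : Measurable X)
    (hlaw : ∀ x, (μ {ω | X ω = x}).toReal = PR x)
    (Y : Ω → ℝ) (hY : Integrable Y μ)
    (hcond : ∀ x, ∫ ω in {ω | X ω = x}, Y ω ∂μ = g x * PR x) :
    ∫ ω, (Pf (X ω) / PRhat (X ω)) * (Y ω - g (X ω)) ∂μ = 0 := by
  have hresidual : Integrable (fun ω => Y ω - g (X ω)) μ :=
    hY.sub ((Integrable.of_finite (μ := μ.map X)).comp_measurable hX)
  rw [integral_comp_mul_eq_sum_setIntegral hX (fun x => Pf x / PRhat x) hresidual]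
  refine Finset.sum_eq_zero fun x _ => ?_
  rw [setIntegral_sub_comp_fibre hX g hY x, hcond x, measureReal_def, hlaw x, sub_self, mul_zero]

/-- **Key step in the proof of Theorem 2, case 2.** When the outcome model is the true
conditional mean, the bias-correction term vanishes in expectation for any positive
weighting function: `∫ (Pf (X ω) / P̂R (X ω)) * (Y ω − g (X ω)) dμ = 0`. -/
theorem bias_correction_vanishes {𝒳 : Type*} [Fintype 𝒳]
    [MeasurableSpace 𝒳] [MeasurableSingletonClass 𝒳]
    (PR : 𝒳 → ℝ)
    (hPR_nonneg : ∀ x, 0 ≤ PR x) (hPR_sum : ∑ x, PR x = 1)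
    (Pf g : 𝒳 → ℝ)
    (PRhat : 𝒳 → ℝ) (hPRhat_pos : ∀ x, 0 < PRhat x)
    {Ω : Type*} [MeasurableSpace Ω] (μ : Measure Ω) [IsProbabilityMeasure μ]
    (X : Ω → 𝒳) (hX : Measurable X)
    (hlaw : ∀ x, (μ {ω | X ω = x}).toReal = PR x)
    (Y : Ω → ℝ) (hY : Integrable Y μ)
    (hcond : ∀ x, ∫ ω in {ω | X ω = x}, Y ω ∂μ = g x * PR x) :
    ∫ ω, (Pf (X ω) / PRhat (X ω)) * (Y ω - g (X ω)) ∂μ = 0 :=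
  bias_correction_vanishes_general PR Pf g PRhat μ X hX hlaw Y hY hcond
end

section
/- Let 𝒳 be a finite set; let P^f, P^R, P^{f⁰} be probability distributions on 𝒳 with P^f satisfying overlap with respect to both P^R and P^{f⁰}; and let g, σ², ĝ : 𝒳 → ℝ. Let (Ω, μ) be a probability space and suppose (X_1,Y_1),…,(X_n,Y_n), X̃_1,…,X̃_m are jointly independent, where the (X_i,Y_i) are i.i.d. with X_i of law P^R and Y_i square-integrable with conditional mean g and conditional variance σ² given X_i, and the X̃_j are i.i.d. with law P^{f⁰}. Then the variance of the DR-CPO estimator V̂_DR = (1/n) ∑_{i=1}^n (P^f(X_i)/P^R(X_i))·(Y_i − ĝ(X_i)) + (1/m) ∑_{j=1}^m (P^f(X̃_j)/P^{f⁰}(X̃_j))·ĝ(X̃_j) is Var(V̂_DR) = (1/n)·[ ∑_{x∈𝒳} P^R(x)·(P^f(x)/P^R(x))²·σ²(x) + Var_{X∼P^R}((P^f(X)/P^R(X))·(g(X) − ĝ(X))) ] + (1/m)·Var_{X̃∼P^{f⁰}}((P^f(X̃)/P^{f⁰}(X̃))·ĝ(X̃)). (Exact variance of the DR-CPO objective estimator,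 from the proof of Proposition 3.) -/
open MeasureTheory ProbabilityTheory Finset

section Aux
set_option linter.unusedSectionVars false
variable {𝒳 : Type*} [Fintype 𝒳] [MeasurableSpace 𝒳] [MeasurableSingletonClass 𝒳]
variable {Ω : Type*} [MeasurableSpace Ω] {μ : Measure Ω}

lemma drcpo_fiber_decomp (X : Ω → 𝒳) (F : 𝒳 → Ω → ℝ) (ω : Ω) :
    F (X ω) ω = ∑ x, Set.indicator {ω' | X ω' = x} (F x) ω := by
  rw [Finset.sum_eq_single (X ω)
    (fun b _ hb => Set.indicator_of_notMem
      (show ω ∉ {ω' | X ω' = b} from fun h => hb (Eq.symm h)) (F b))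
    (fun h => absurd (Finset.mem_univ _) h)]
  exact (Set.indicator_of_mem (show ω ∈ {ω' | X ω' = X ω} from rfl) (F (X ω))).symm

lemma drcpo_fiber_meas {X : Ω → 𝒳} (hX : Measurable X) (x : 𝒳) :
    MeasurableSet {ω' | X ω' = x} := hX (measurableSet_singleton x)

lemma drcpo_fiber_integrable {X : Ω → 𝒳} (hX : Measurable X) {F : 𝒳 → Ω → ℝ}
    (hF : ∀ x, Integrable (F x) μ) : Integrable (fun ω => F (X ω) ω) μ := by
  have heq : (fun ω => F (X ω) ω)
      = fun ω => ∑ x, Set.indicator {ω' | X ω' = x} (F x) ω :=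
    funext (drcpo_fiber_decomp X F)
  rw [heq]
  exact integrable_finset_sum _ fun x _ => (hF x).indicator (drcpo_fiber_meas hX x)

lemma drcpo_fiber_integral {X : Ω → 𝒳} (hX : Measurable X) {F : 𝒳 → Ω → ℝ}
    (hF : ∀ x, Integrable (F x) μ) :
    ∫ ω, F (X ω) ω ∂μ = ∑ x, ∫ ω in {ω' | X ω' = x}, F x ω ∂μ := by
  have heq : (fun ω => F (X ω) ω)
      = fun ω => ∑ x, Set.indicator {ω' | X ω' = x} (F x) ω :=
    funext (drcpo_fiber_decomp X F)
  rw [heq, integral_finset_sum _ fun x _ => (hF x).indicator (drcpo_fiber_meas hX x)]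
  exact Finset.sum_congr rfl fun x _ => integral_indicator (drcpo_fiber_meas hX x)

end Aux

/-- **Exact variance of the DR-CPO objective estimator** (from the proof of
Proposition 3): with `(Xᵢ, Yᵢ)` i.i.d. (`Xᵢ ∼ PR`, conditional mean `g`, conditional
variance `σ²`), `X̃ⱼ` i.i.d. with law `Pf0`, all jointly independent, and a fixed
outcome model `ĝ`,
`Var(V̂_DR) = (1/n)·[∑ x, PR x (Pf x/PR x)² σ² x
                      + Var_{X∼PR}((Pf(X)/PR(X))(g(X) − ĝ(X)))]
             + (1/m)·Var_{X̃∼Pf0}((Pf(X̃)/Pf0(X̃)) ĝ(X̃))`,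
where `Var(Z) = ∫ Z² dμ − (∫ Z dμ)²`. -/
theorem dr_cpo_estimator_variance {𝒳 : Type*} [Fintype 𝒳]
    [MeasurableSpace 𝒳] [MeasurableSingletonClass 𝒳]
    (Pf PR Pf0 : 𝒳 → ℝ)
    (hPf_nonneg : ∀ x, 0 ≤ Pf x) (hPf_sum : ∑ x, Pf x = 1)
    (hPR_nonneg : ∀ x, 0 ≤ PR x) (hPR_sum : ∑ x, PR x = 1)
    (hPf0_nonneg : ∀ x, 0 ≤ Pf0 x) (hPf0_sum : ∑ x, Pf0 x = 1)
    (h_overlap_R : ∀ x, PR x = 0 → Pf x = 0)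
    (h_overlap_0 : ∀ x, Pf0 x = 0 → Pf x = 0)
    (g σ2 ghat : 𝒳 → ℝ)
    {Ω : Type*} [MeasurableSpace Ω] (μ : Measure Ω) [IsProbabilityMeasure μ]
    (n m : ℕ) (hn : 0 < n) (hm : 0 < m)
    (X : Fin n → Ω → 𝒳) (hX : ∀ i, Measurable (X i))
    (Y : Fin n → Ω → ℝ) (hYmeas : ∀ i, Measurable (Y i))
    (Xt : Fin m → Ω → 𝒳) (hXt : ∀ j, Measurable (Xt j))
    (hindep : iIndepFun
      (m := fun s : Fin n ⊕ Fin m =>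
        Sum.rec (motive := fun s =>
            MeasurableSpace (Sum.elim (fun _ => 𝒳 × ℝ) (fun _ => 𝒳) s))
          (fun _ => (inferInstance : MeasurableSpace (𝒳 × ℝ)))
          (fun _ => (inferInstance : MeasurableSpace 𝒳)) s)
      (fun s =>
        Sum.rec (motive := fun s => Ω → Sum.elim (fun _ => 𝒳 × ℝ) (fun _ => 𝒳) s)
          (fun i ω => (X i ω, Y i ω)) (fun j => Xt j) s) μ)
    (hident : ∀ i j, IdentDistrib (fun ω => (X i ω, Y i ω)) (fun ω => (X j ω, Y j ω)) μ μ)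
    (hidentt : ∀ j j', IdentDistrib (Xt j) (Xt j') μ μ)
    (hlaw : ∀ i x, (μ {ω | X i ω = x}).toReal = PR x)
    (hlawt : ∀ j x, (μ {ω | Xt j ω = x}).toReal = Pf0 x)
    (hY : ∀ i, Integrable (Y i) μ) (hY2 : ∀ i, Integrable (fun ω => (Y i ω) ^ 2) μ)
    (hcond_mean : ∀ i x, ∫ ω in {ω | X i ω = x}, Y i ω ∂μ = g x * PR x)
    (hcond_var : ∀ i x,
      ∫ ω in {ω | X i ω = x}, (Y i ω - g (X i ω)) ^ 2 ∂μ = σ2 x * PR x) :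
    (∫ ω, ((1 / (n : ℝ)) * ∑ i, (Pf (X i ω) / PR (X i ω)) * (Y i ω - ghat (X i ω))
          + (1 / (m : ℝ)) * ∑ j, (Pf (Xt j ω) / Pf0 (Xt j ω)) * ghat (Xt j ω)) ^ 2 ∂μ)
      - (∫ ω, ((1 / (n : ℝ)) * ∑ i, (Pf (X i ω) / PR (X i ω)) * (Y i ω - ghat (X i ω))
          + (1 / (m : ℝ)) * ∑ j, (Pf (Xt j ω) / Pf0 (Xt j ω)) * ghat (Xt j ω)) ∂μ) ^ 2
      = (1 / (n : ℝ)) *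
          ((∑ x, PR x * (Pf x / PR x) ^ 2 * σ2 x)
            + ((∑ x, PR x * ((Pf x / PR x) * (g x - ghat x)) ^ 2)
              - (∑ x, PR x * ((Pf x / PR x) * (g x - ghat x))) ^ 2))
        + (1 / (m : ℝ)) *
          ((∑ x, Pf0 x * ((Pf x / Pf0 x) * ghat x) ^ 2)
            - (∑ x, Pf0 x * ((Pf x / Pf0 x) * ghat x)) ^ 2) := by
  classical
  have hn' : (n : ℝ) ≠ 0 := Nat.cast_ne_zero.mpr hn.ne'
  have hm' : (m : ℝ) ≠ 0 := Nat.cast_ne_zero.mpr hm.ne'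
  set A1 := ∑ x, PR x * (Pf x / PR x) ^ 2 * σ2 x with hA1
  set A2 := ∑ x, PR x * ((Pf x / PR x) * (g x - ghat x)) ^ 2 with hA2
  set A3 := ∑ x, PR x * ((Pf x / PR x) * (g x - ghat x)) with hA3
  set B2 := ∑ x, Pf0 x * ((Pf x / Pf0 x) * ghat x) ^ 2 with hB2
  set B3 := ∑ x, Pf0 x * ((Pf x / Pf0 x) * ghat x) with hB3
  set Z : Fin n → Ω → ℝ :=
    fun i ω => (Pf (X i ω) / PR (X i ω)) * (Y i ω - ghat (X i ω)) with hZdef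
  set W : Fin m → Ω → ℝ :=
    fun j ω => (Pf (Xt j ω) / Pf0 (Xt j ω)) * ghat (Xt j ω) with hWdef
  -- basic integrability
  have hYc : ∀ (i : Fin n) (c d : ℝ), Integrable (fun ω => c * (Y i ω - d)) μ :=
    fun i c d => ((hY i).sub (integrable_const d)).const_mul c
  have hYc2 : ∀ (i : Fin n) (c d : ℝ), Integrable (fun ω => (c * (Y i ω - d)) ^ 2) μ := by
    intro i c d
    have h : (fun ω => (c * (Y i ω - d)) ^ 2)
        = fun ω => c ^ 2 * (Y i ω) ^ 2 + ((-2 * c ^ 2 * d) * Y i ω + c ^ 2 * d ^ 2) := by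
      funext ω; ring
    rw [h]
    exact ((hY2 i).const_mul _).add (((hY i).const_mul _).add (integrable_const _))
  have hYd2 : ∀ (i : Fin n) (d : ℝ), Integrable (fun ω => (Y i ω - d) ^ 2) μ := by
    intro i d
    have h : (fun ω => (Y i ω - d) ^ 2)
        = fun ω => (Y i ω) ^ 2 + ((-2 * d) * Y i ω + d ^ 2) := by
      funext ω; ring
    rw [h]
    exact (hY2 i).add (((hY i).const_mul _).add (integrable_const _))
  have hZint : ∀ i, Integrable (Z i) μ := fun i =>
    drcpo_fiber_integrable (hX i) (F := fun x ω => (Pf x / PR x) * (Y i ω - ghat x))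
      (fun x => hYc i _ _)
  have hZ2int : ∀ i, Integrable (fun ω => (Z i ω) ^ 2) μ := fun i =>
    drcpo_fiber_integrable (hX i) (F := fun x ω => ((Pf x / PR x) * (Y i ω - ghat x)) ^ 2)
      (fun x => hYc2 i _ _)
  have hWint : ∀ j, Integrable (W j) μ := fun j =>
    drcpo_fiber_integrable (hXt j) (F := fun x _ => (Pf x / Pf0 x) * ghat x)
      (fun x => integrable_const _)
  have hW2int : ∀ j, Integrable (fun ω => (W j ω) ^ 2) μ := fun j =>
    drcpo_fiber_integrable (hXt j) (F := fun x _ => ((Pf x / Pf0 x) * ghat x) ^ 2)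
      (fun x => integrable_const _)
  -- first moments
  have hEZ : ∀ i, ∫ ω, Z i ω ∂μ = A3 := by
    intro i
    have hfib := drcpo_fiber_integral (μ := μ) (hX i)
      (F := fun x ω => (Pf x / PR x) * (Y i ω - ghat x)) (fun x => hYc i _ _)
    refine Eq.trans hfib ?_
    rw [hA3]
    refine Finset.sum_congr rfl fun x _ => ?_
    rw [integral_const_mul,
      integral_sub ((hY i).integrableOn) ((integrable_const _).integrableOn),
      hcond_mean i x, setIntegral_const, smul_eq_mul, measureReal_def, hlaw i x]
    ring
  have hEZ2 : ∀ i, ∫ ω, (Z i ω) ^ 2 ∂μ = A1 + A2 := by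
    intro i
    have hfib := drcpo_fiber_integral (μ := μ) (hX i)
      (F := fun x ω => ((Pf x / PR x) * (Y i ω - ghat x)) ^ 2) (fun x => hYc2 i _ _)
    refine Eq.trans hfib ?_
    rw [hA1, hA2, ← Finset.sum_add_distrib]
    refine Finset.sum_congr rfl fun x _ => ?_
    have h1 : ∫ ω in {ω' | X i ω' = x}, (Y i ω - g x) ^ 2 ∂μ = σ2 x * PR x := by
      rw [← hcond_var i x]
      refine setIntegral_congr_fun (drcpo_fiber_meas (hX i) x) (fun ω hω => ?_)
      have : X i ω = x := hω
      rw [this]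
    have hexp : ∀ ω, ((Pf x / PR x) * (Y i ω - ghat x)) ^ 2
        = (Pf x / PR x) ^ 2 * (Y i ω - g x) ^ 2
          + ((Pf x / PR x) ^ 2 * (2 * (g x - ghat x))) * Y i ω
          + (Pf x / PR x) ^ 2 * ((ghat x) ^ 2 - (g x) ^ 2) := fun ω => by ring
    simp only [hexp]
    have e1 : ∫ ω in {ω' | X i ω' = x},
          ((Pf x / PR x) ^ 2 * (Y i ω - g x) ^ 2
            + (Pf x / PR x) ^ 2 * (2 * (g x - ghat x)) * Y i ω
            + (Pf x / PR x) ^ 2 * (ghat x ^ 2 - g x ^ 2)) ∂μ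
        = (∫ ω in {ω' | X i ω' = x},
            ((Pf x / PR x) ^ 2 * (Y i ω - g x) ^ 2
              + (Pf x / PR x) ^ 2 * (2 * (g x - ghat x)) * Y i ω) ∂μ)
          + ∫ _ω in {ω' | X i ω' = x}, (Pf x / PR x) ^ 2 * (ghat x ^ 2 - g x ^ 2) ∂μ :=
      integral_add ((((hYd2 i (g x)).const_mul _).integrableOn).add
          (((hY i).const_mul _).integrableOn))
        ((integrable_const _).integrableOn)
    have e2 : ∫ ω in {ω' | X i ω' = x},
          ((Pf x / PR x) ^ 2 * (Y i ω - g x) ^ 2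
            + (Pf x / PR x) ^ 2 * (2 * (g x - ghat x)) * Y i ω) ∂μ
        = (∫ ω in {ω' | X i ω' = x}, (Pf x / PR x) ^ 2 * (Y i ω - g x) ^ 2 ∂μ)
          + ∫ ω in {ω' | X i ω' = x}, (Pf x / PR x) ^ 2 * (2 * (g x - ghat x)) * Y i ω ∂μ :=
      integral_add (((hYd2 i (g x)).const_mul _).integrableOn)
        (((hY i).const_mul _).integrableOn)
    rw [e1, e2, integral_const_mul, integral_const_mul, h1, hcond_mean i x,
      setIntegral_const, smul_eq_mul, measureReal_def, hlaw i x]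
    ring
  have hEW : ∀ j, ∫ ω, W j ω ∂μ = B3 := by
    intro j
    have hfib := drcpo_fiber_integral (μ := μ) (hXt j)
      (F := fun x _ => (Pf x / Pf0 x) * ghat x) (fun x => integrable_const _)
    refine Eq.trans hfib ?_
    rw [hB3]
    refine Finset.sum_congr rfl fun x _ => ?_
    rw [setIntegral_const, smul_eq_mul, measureReal_def, hlawt j x]
  have hEW2 : ∀ j, ∫ ω, (W j ω) ^ 2 ∂μ = B2 := by
    intro j
    have hfib := drcpo_fiber_integral (μ := μ) (hXt j)
      (F := fun x _ => ((Pf x / Pf0 x) * ghat x) ^ 2) (fun x => integrable_const _)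
    refine Eq.trans hfib ?_
    rw [hB2]
    refine Finset.sum_congr rfl fun x _ => ?_
    rw [setIntegral_const, smul_eq_mul, measureReal_def, hlawt j x]
  -- independence
  have hφ : Measurable (fun p : 𝒳 × ℝ => (Pf p.1 / PR p.1) * (p.2 - ghat p.1)) := by
    have h1 : Measurable (fun p : 𝒳 × ℝ => Pf p.1 / PR p.1) :=
      (measurable_of_countable (fun x : 𝒳 => Pf x / PR x)).comp measurable_fst
    have h2 : Measurable (fun p : 𝒳 × ℝ => ghat p.1) :=
      (measurable_of_countable ghat).comp measurable_fst
    exact h1.mul (measurable_snd.sub h2)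
  have hψ : Measurable (fun x : 𝒳 => (Pf x / Pf0 x) * ghat x) := measurable_of_countable _
  have hindZZ : ∀ i i', i ≠ i' → IndepFun (Z i) (Z i') μ := by
    intro i i' h
    have h0 := hindep.indepFun
      (show (Sum.inl i : Fin n ⊕ Fin m) ≠ Sum.inl i' from fun hc => h (Sum.inl.inj hc))
    exact h0.comp hφ hφ
  have hindZW : ∀ (i : Fin n) (j : Fin m), IndepFun (Z i) (W j) μ := by
    intro i j
    have h0 := hindep.indepFun
      (show (Sum.inl i : Fin n ⊕ Fin m) ≠ Sum.inr j from fun hc => Sum.inl_ne_inr hc)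
    exact h0.comp hφ hψ
  have hindWW : ∀ j j', j ≠ j' → IndepFun (W j) (W j') μ := by
    intro j j' h
    have h0 := hindep.indepFun
      (show (Sum.inr j : Fin n ⊕ Fin m) ≠ Sum.inr j' from fun hc => h (Sum.inr.inj hc))
    exact h0.comp hψ hψ
  -- product moments
  have hZZint : ∀ i i', Integrable (fun ω => Z i ω * Z i' ω) μ := by
    intro i i'
    by_cases h : i = i'
    · subst h
      have heq : (fun ω => Z i ω * Z i ω) = fun ω => (Z i ω) ^ 2 :=
        funext fun ω => (pow_two _).symm
      rw [heq]; exact hZ2int i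
    · exact (hindZZ i i' h).integrable_mul (hZint i) (hZint i')
  have hZWint : ∀ i j, Integrable (fun ω => Z i ω * W j ω) μ := fun i j =>
    (hindZW i j).integrable_mul (hZint i) (hWint j)
  have hWWint : ∀ j j', Integrable (fun ω => W j ω * W j' ω) μ := by
    intro j j'
    by_cases h : j = j'
    · subst h
      have heq : (fun ω => W j ω * W j ω) = fun ω => (W j ω) ^ 2 :=
        funext fun ω => (pow_two _).symm
      rw [heq]; exact hW2int j
    · exact (hindWW j j' h).integrable_mul (hWint j) (hWint j')
  have hEZZ : ∀ i i', i ≠ i' → ∫ ω, Z i ω * Z i' ω ∂μ = A3 * A3 := by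
    intro i i' h
    exact ((hindZZ i i' h).integral_fun_mul_eq_mul_integral (hZint i).1 (hZint i').1).trans
      (by rw [hEZ i, hEZ i'])
  have hEZW : ∀ i j, ∫ ω, Z i ω * W j ω ∂μ = A3 * B3 := by
    intro i j
    exact ((hindZW i j).integral_fun_mul_eq_mul_integral (hZint i).1 (hWint j).1).trans
      (by rw [hEZ i, hEW j])
  have hEWW : ∀ j j', j ≠ j' → ∫ ω, W j ω * W j' ω ∂μ = B3 * B3 := by
    intro j j' h
    exact ((hindWW j j' h).integral_fun_mul_eq_mul_integral (hWint j).1 (hWint j').1).trans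
      (by rw [hEW j, hEW j'])
  -- double sums
  have hrowZ : ∑ i : Fin n, ∑ i' : Fin n, (∫ ω, Z i ω * Z i' ω ∂μ)
      = (n : ℝ) * (A1 + A2) + ((n : ℝ) ^ 2 - n) * A3 ^ 2 := by
    have hentry : ∀ i i' : Fin n, (∫ ω, Z i ω * Z i' ω ∂μ)
        = (if i' = i then (A1 + A2) - A3 ^ 2 else 0) + A3 ^ 2 := by
      intro i i'
      by_cases h : i' = i
      · subst h
        have heq : (fun ω => Z i' ω * Z i' ω) = fun ω => (Z i' ω) ^ 2 :=
          funext fun ω => (pow_two _).symm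
        rw [if_pos rfl, show (∫ ω, Z i' ω * Z i' ω ∂μ) = A1 + A2 from
          (congrArg (integral μ) heq).trans (hEZ2 i')]
        ring
      · rw [hEZZ i i' (fun hc => h hc.symm), if_neg h]; ring
    calc ∑ i : Fin n, ∑ i' : Fin n, (∫ ω, Z i ω * Z i' ω ∂μ)
        = ∑ i : Fin n, (((A1 + A2) - A3 ^ 2) + (n : ℝ) * A3 ^ 2) := by
          refine Finset.sum_congr rfl fun i _ => ?_
          rw [Finset.sum_congr rfl fun i' _ => hentry i i', Finset.sum_add_distrib,
            Finset.sum_ite_eq' Finset.univ i (fun _ => (A1 + A2) - A3 ^ 2),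
            if_pos (Finset.mem_univ i), Finset.sum_const, Finset.card_univ,
            Fintype.card_fin, nsmul_eq_mul]
      _ = (n : ℝ) * (A1 + A2) + ((n : ℝ) ^ 2 - n) * A3 ^ 2 := by
          rw [Finset.sum_const, Finset.card_univ, Fintype.card_fin, nsmul_eq_mul]; ring
  have hrowW : ∑ j : Fin m, ∑ j' : Fin m, (∫ ω, W j ω * W j' ω ∂μ)
      = (m : ℝ) * B2 + ((m : ℝ) ^ 2 - m) * B3 ^ 2 := by
    have hentry : ∀ j j' : Fin m, (∫ ω, W j ω * W j' ω ∂μ)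
        = (if j' = j then B2 - B3 ^ 2 else 0) + B3 ^ 2 := by
      intro j j'
      by_cases h : j' = j
      · subst h
        have heq : (fun ω => W j' ω * W j' ω) = fun ω => (W j' ω) ^ 2 :=
          funext fun ω => (pow_two _).symm
        rw [if_pos rfl, show (∫ ω, W j' ω * W j' ω ∂μ) = B2 from
          (congrArg (integral μ) heq).trans (hEW2 j')]
        ring
      · rw [hEWW j j' (fun hc => h hc.symm), if_neg h]; ring
    calc ∑ j : Fin m, ∑ j' : Fin m, (∫ ω, W j ω * W j' ω ∂μ)
        = ∑ j : Fin m, ((B2 - B3 ^ 2) + (m : ℝ) * B3 ^ 2) := by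
          refine Finset.sum_congr rfl fun j _ => ?_
          rw [Finset.sum_congr rfl fun j' _ => hentry j j', Finset.sum_add_distrib,
            Finset.sum_ite_eq' Finset.univ j (fun _ => B2 - B3 ^ 2),
            if_pos (Finset.mem_univ j), Finset.sum_const, Finset.card_univ,
            Fintype.card_fin, nsmul_eq_mul]
      _ = (m : ℝ) * B2 + ((m : ℝ) ^ 2 - m) * B3 ^ 2 := by
          rw [Finset.sum_const, Finset.card_univ, Fintype.card_fin, nsmul_eq_mul]; ring
  have hrowZW : ∑ i : Fin n, ∑ j : Fin m, (∫ ω, Z i ω * W j ω ∂μ)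
      = (n : ℝ) * (m : ℝ) * (A3 * B3) := by
    rw [Finset.sum_congr rfl fun i _ => Finset.sum_congr rfl fun j _ => hEZW i j]
    simp [Finset.sum_const, Finset.card_univ, mul_assoc]
  -- the two main integrals
  have hI1 : (∫ ω, ((1 / (n : ℝ)) * ∑ i, Z i ω + (1 / (m : ℝ)) * ∑ j, W j ω) ∂μ)
      = A3 + B3 := by
    rw [integral_add ((integrable_finset_sum _ fun i _ => hZint i).const_mul _)
        ((integrable_finset_sum _ fun j _ => hWint j).const_mul _),
      integral_const_mul, integral_const_mul,
      integral_finset_sum _ (fun i _ => hZint i),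
      integral_finset_sum _ (fun j _ => hWint j),
      Finset.sum_congr rfl (fun i _ => hEZ i), Finset.sum_congr rfl (fun j _ => hEW j),
      Finset.sum_const, Finset.sum_const, Finset.card_univ, Finset.card_univ,
      Fintype.card_fin, Fintype.card_fin, nsmul_eq_mul, nsmul_eq_mul]
    field_simp
  have hI2 : (∫ ω, ((1 / (n : ℝ)) * ∑ i, Z i ω + (1 / (m : ℝ)) * ∑ j, W j ω) ^ 2 ∂μ)
      = (1 / (n : ℝ)) ^ 2 * ((n : ℝ) * (A1 + A2) + ((n : ℝ) ^ 2 - n) * A3 ^ 2)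
        + (2 * (1 / (n : ℝ)) * (1 / (m : ℝ))) * ((n : ℝ) * (m : ℝ) * (A3 * B3))
        + (1 / (m : ℝ)) ^ 2 * ((m : ℝ) * B2 + ((m : ℝ) ^ 2 - m) * B3 ^ 2) := by
    have hsq : ∀ ω, ((1 / (n : ℝ)) * ∑ i, Z i ω + (1 / (m : ℝ)) * ∑ j, W j ω) ^ 2
        = (1 / (n : ℝ)) ^ 2 * ∑ i, ∑ i', Z i ω * Z i' ω
          + (2 * (1 / (n : ℝ)) * (1 / (m : ℝ))) * ∑ i, ∑ j, Z i ω * W j ω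
          + (1 / (m : ℝ)) ^ 2 * ∑ j, ∑ j', W j ω * W j' ω := by
      intro ω
      rw [← Finset.sum_mul_sum, ← Finset.sum_mul_sum, ← Finset.sum_mul_sum]
      ring
    have hPint : Integrable (fun ω => (1 / (n : ℝ)) ^ 2 * ∑ i, ∑ i', Z i ω * Z i' ω) μ :=
      (integrable_finset_sum _ fun i _ =>
        integrable_finset_sum _ fun i' _ => hZZint i i').const_mul _
    have hQint : Integrable (fun ω =>
        (2 * (1 / (n : ℝ)) * (1 / (m : ℝ))) * ∑ i, ∑ j, Z i ω * W j ω) μ :=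
      (integrable_finset_sum _ fun i _ =>
        integrable_finset_sum _ fun j _ => hZWint i j).const_mul _
    have hRint : Integrable (fun ω => (1 / (m : ℝ)) ^ 2 * ∑ j, ∑ j', W j ω * W j' ω) μ :=
      (integrable_finset_sum _ fun j _ =>
        integrable_finset_sum _ fun j' _ => hWWint j j').const_mul _
    have e1 : ∫ ω, ((1 / (n : ℝ)) ^ 2 * ∑ i, ∑ i', Z i ω * Z i' ω
            + (2 * (1 / (n : ℝ)) * (1 / (m : ℝ))) * ∑ i, ∑ j, Z i ω * W j ω
            + (1 / (m : ℝ)) ^ 2 * ∑ j, ∑ j', W j ω * W j' ω) ∂μ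
        = (∫ ω, ((1 / (n : ℝ)) ^ 2 * ∑ i, ∑ i', Z i ω * Z i' ω
            + (2 * (1 / (n : ℝ)) * (1 / (m : ℝ))) * ∑ i, ∑ j, Z i ω * W j ω) ∂μ)
          + ∫ ω, (1 / (m : ℝ)) ^ 2 * ∑ j, ∑ j', W j ω * W j' ω ∂μ :=
      integral_add (hPint.add hQint) hRint
    have e2 : ∫ ω, ((1 / (n : ℝ)) ^ 2 * ∑ i, ∑ i', Z i ω * Z i' ω
            + (2 * (1 / (n : ℝ)) * (1 / (m : ℝ))) * ∑ i, ∑ j, Z i ω * W j ω) ∂μ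
        = (∫ ω, (1 / (n : ℝ)) ^ 2 * ∑ i, ∑ i', Z i ω * Z i' ω ∂μ)
          + ∫ ω, (2 * (1 / (n : ℝ)) * (1 / (m : ℝ))) * ∑ i, ∑ j, Z i ω * W j ω ∂μ :=
      integral_add hPint hQint
    simp only [hsq]
    rw [e1, e2,
      integral_const_mul, integral_const_mul, integral_const_mul,
      integral_finset_sum _ (fun i _ => integrable_finset_sum _ fun i' _ => hZZint i i'),
      integral_finset_sum _ (fun j _ => integrable_finset_sum _ fun j' _ => hWWint j j'),
      integral_finset_sum _ (fun i _ => integrable_finset_sum _ fun j _ => hZWint i j)]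
    rw [Finset.sum_congr rfl (fun i (_ : i ∈ Finset.univ) =>
        integral_finset_sum _ (fun i' _ => hZZint i i')),
      Finset.sum_congr rfl (fun i (_ : i ∈ Finset.univ) =>
        integral_finset_sum _ (fun j _ => hZWint i j)),
      Finset.sum_congr rfl (fun j (_ : j ∈ Finset.univ) =>
        integral_finset_sum _ (fun j' _ => hWWint j j')),
      hrowZ, hrowZW, hrowW]
  -- conclude
  rw [show (∫ ω, ((1 / (n : ℝ)) * ∑ i, (Pf (X i ω) / PR (X i ω)) * (Y i ω - ghat (X i ω))
          + (1 / (m : ℝ)) * ∑ j, (Pf (Xt j ω) / Pf0 (Xt j ω)) * ghat (Xt j ω)) ^ 2 ∂μ)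
      = (∫ ω, ((1 / (n : ℝ)) * ∑ i, Z i ω + (1 / (m : ℝ)) * ∑ j, W j ω) ^ 2 ∂μ) from rfl,
    show (∫ ω, ((1 / (n : ℝ)) * ∑ i, (Pf (X i ω) / PR (X i ω)) * (Y i ω - ghat (X i ω))
          + (1 / (m : ℝ)) * ∑ j, (Pf (Xt j ω) / Pf0 (Xt j ω)) * ghat (Xt j ω)) ∂μ)
      = (∫ ω, ((1 / (n : ℝ)) * ∑ i, Z i ω + (1 / (m : ℝ)) * ∑ j, W j ω) ∂μ) from rfl,
    hI2, hI1]
  field_simp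
  ring
end

section
/- Let 𝒳 be a finite set; let P^f, P^R, P^{f⁰} be probability distributions on 𝒳 with P^f satisfying overlap with respect to both P^R and P^{f⁰}; and let g, σ², ĝ : 𝒳 → ℝ. Let (Ω, μ) be a probability space and suppose (X_1,Y_1),…,(X_n,Y_n), X̃_1,…,X̃_m are jointly independent, where the (X_i,Y_i) are i.i.d. with X_i of law P^R and Y_i square-integrable with conditional mean g and conditional variance σ² given X_i, and the X̃_j are i.i.d. with law P^{f⁰}. Define V̂_IPW = (1/n) ∑_{i=1}^n (P^f(X_i)/P^R(X_i))·Y_i and V̂_DR = (1/n) ∑_{i=1}^n (P^f(X_i)/P^R(X_i))·(Y_i − ĝ(X_i)) + (1/m) ∑_{j=1}^m (P^f(X̃_j)/P^{f⁰}(X̃_j))·ĝ(X̃_j). Then n·( Var(V̂_IPW) − Var(V̂_DR) ) = Var_{X∼P^R}((P^f(X)/P^R(X))·g(X)) − Var_{X∼P^R}((P^f(X)/P^R(X))·(g(X) − ĝ(X))) − (n/m)·Var_{X̃∼P^{f⁰}}((P^f(X̃)/P^{f⁰}(X̃))·ĝ(X̃)). (Proposition 3: the exact difference between the variances of the CPO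 and DR-CPO objective estimators.) -/
set_option linter.unusedSectionVars false
set_option maxHeartbeats 1000000
open MeasureTheory ProbabilityTheory Finset

section Aux
variable {Ω : Type*} [MeasurableSpace Ω] {μ : Measure Ω} [IsProbabilityMeasure μ]
variable {𝒳 : Type*} [Fintype 𝒳] [MeasurableSpace 𝒳] [MeasurableSingletonClass 𝒳]

lemma aux_memLp_two_of_bound {G : Ω → ℝ} (hG : Measurable G) (C : ℝ)
    (hC : ∀ ω, |G ω| ≤ C) : MemLp G 2 μ := by
  refine (memLp_two_iff_integrable_sq hG.aestronglyMeasurable).2 ?_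
  refine Integrable.mono' (integrable_const (C ^ 2))
    (hG.pow_const 2).aestronglyMeasurable ?_
  filter_upwards with ω
  have h1 := hC ω
  have h2 := abs_nonneg (G ω)
  rw [Real.norm_eq_abs, abs_of_nonneg (sq_nonneg _)]
  calc G ω ^ 2 = |G ω| ^ 2 := (sq_abs _).symm
    _ ≤ C ^ 2 := by nlinarith

omit [IsProbabilityMeasure μ] in
lemma aux_memLp_mul {G F : Ω → ℝ} (hG : Measurable G) (hF : Measurable F) (C : ℝ)
    (hC : ∀ ω, |G ω| ≤ C) (hF2 : Integrable (fun ω => F ω ^ 2) μ) :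
    MemLp (fun ω => G ω * F ω) 2 μ := by
  refine (memLp_two_iff_integrable_sq ((hG.mul hF).aestronglyMeasurable)).2 ?_
  refine Integrable.mono' (hF2.const_mul (C ^ 2))
    (((hG.mul hF).pow_const 2).aestronglyMeasurable) ?_
  filter_upwards with ω
  have h1 := hC ω
  have h2 := abs_nonneg (G ω)
  have h3 := sq_nonneg (F ω)
  rw [Real.norm_eq_abs, abs_of_nonneg (sq_nonneg _), Pi.mul_apply, mul_pow]
  have hsq : G ω ^ 2 ≤ C ^ 2 := by
    calc G ω ^ 2 = |G ω| ^ 2 := (sq_abs _).symm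
      _ ≤ C ^ 2 := by nlinarith
  nlinarith

omit [IsProbabilityMeasure μ] in
lemma aux_integral_partition {F : Ω → ℝ} (hF : Integrable F μ) {X : Ω → 𝒳}
    (hX : Measurable X) :
    ∫ ω, F ω ∂μ = ∑ x, ∫ ω in X ⁻¹' {x}, F ω ∂μ := by
  rw [← setIntegral_univ (f := F) (μ := μ)]
  have hu : (Set.univ : Set Ω) = ⋃ x, X ⁻¹' {x} := by ext ω; simp
  rw [hu, integral_iUnion_fintype (fun x => hX (measurableSet_singleton x))
    ?_ (fun x => hF.integrableOn)]
  intro a b hab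
  refine Set.disjoint_left.2 fun ω h1 h2 => hab ?_
  simp only [Set.mem_preimage, Set.mem_singleton_iff] at h1 h2
  rw [← h1, ← h2]

omit [IsProbabilityMeasure μ] [Fintype 𝒳] in
lemma aux_setIntegral_congr_comp {X : Ω → 𝒳} (hX : Measurable X) (x : 𝒳)
    (F G : Ω → ℝ) (h : ∀ ω, X ω = x → F ω = G ω) :
    ∫ ω in X ⁻¹' {x}, F ω ∂μ = ∫ ω in X ⁻¹' {x}, G ω ∂μ := by
  refine setIntegral_congr_fun (hX (measurableSet_singleton x)) fun ω hω => ?_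
  exact h ω (by simpa using hω)

omit [IsProbabilityMeasure μ] in
lemma aux_split {X : Ω → 𝒳} (hX : Measurable X) (h : 𝒳 → ℝ) (F : Ω → ℝ)
    (hint : Integrable (fun ω => h (X ω) * F ω) μ) :
    ∫ ω, h (X ω) * F ω ∂μ = ∑ x, h x * ∫ ω in X ⁻¹' {x}, F ω ∂μ := by
  rw [aux_integral_partition hint hX]
  refine sum_congr rfl fun x _ => ?_
  rw [aux_setIntegral_congr_comp hX x _ (fun ω => h x * F ω)
    (fun ω hω => by simp only [hω]), integral_const_mul]

lemma aux_split_comp {X : Ω → 𝒳} (hX : Measurable X) (h law : 𝒳 → ℝ)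
    (hlaw : ∀ x, (μ (X ⁻¹' {x})).toReal = law x) :
    ∫ ω, h (X ω) ∂μ = ∑ x, h x * law x := by
  obtain ⟨C, hC⟩ := Finite.exists_le fun x => |h x|
  have hint : Integrable (fun ω => h (X ω)) μ :=
    (aux_memLp_two_of_bound ((measurable_of_countable h).comp hX) C
      (fun ω => hC (X ω))).integrable one_le_two
  rw [aux_integral_partition hint hX]
  refine sum_congr rfl fun x _ => ?_
  rw [aux_setIntegral_congr_comp hX x _ (fun _ => h x) (fun ω hω => by simp only [hω]),
    setIntegral_const, measureReal_def, hlaw, smul_eq_mul, mul_comm]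

end Aux

/-- **Proposition 3.** The exact difference between the variances of the CPO and DR-CPO
objective estimators: with `(Xᵢ, Yᵢ)` i.i.d. (`Xᵢ ∼ PR`, conditional mean `g`,
conditional variance `σ²`), `X̃ⱼ` i.i.d. with law `Pf0`, all jointly independent, and a
fixed outcome model `ĝ`,
`n·(Var(V̂_IPW) − Var(V̂_DR)) = Var_{X∼PR}((Pf(X)/PR(X)) g(X))
  − Var_{X∼PR}((Pf(X)/PR(X))(g(X) − ĝ(X)))
  − (n/m)·Var_{X̃∼Pf0}((Pf(X̃)/Pf0(X̃)) ĝ(X̃))`,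
where `Var(Z) = ∫ Z² dμ − (∫ Z dμ)²`. -/
theorem cpo_dr_cpo_variance_difference {𝒳 : Type*} [Fintype 𝒳]
    [MeasurableSpace 𝒳] [MeasurableSingletonClass 𝒳]
    (Pf PR Pf0 : 𝒳 → ℝ)
    (hPf_nonneg : ∀ x, 0 ≤ Pf x) (hPf_sum : ∑ x, Pf x = 1)
    (hPR_nonneg : ∀ x, 0 ≤ PR x) (hPR_sum : ∑ x, PR x = 1)
    (hPf0_nonneg : ∀ x, 0 ≤ Pf0 x) (hPf0_sum : ∑ x, Pf0 x = 1)
    (h_overlap_R : ∀ x, PR x = 0 → Pf x = 0)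
    (h_overlap_0 : ∀ x, Pf0 x = 0 → Pf x = 0)
    (g σ2 ghat : 𝒳 → ℝ)
    {Ω : Type*} [MeasurableSpace Ω] (μ : Measure Ω) [IsProbabilityMeasure μ]
    (n m : ℕ) (hn : 0 < n) (hm : 0 < m)
    (X : Fin n → Ω → 𝒳) (hX : ∀ i, Measurable (X i))
    (Y : Fin n → Ω → ℝ) (hYmeas : ∀ i, Measurable (Y i))
    (Xt : Fin m → Ω → 𝒳) (hXt : ∀ j, Measurable (Xt j))
    (hindep : iIndepFun
      (m := fun s : Fin n ⊕ Fin m =>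
        Sum.rec (motive := fun s =>
            MeasurableSpace (Sum.elim (fun _ => 𝒳 × ℝ) (fun _ => 𝒳) s))
          (fun _ => (inferInstance : MeasurableSpace (𝒳 × ℝ)))
          (fun _ => (inferInstance : MeasurableSpace 𝒳)) s)
      (fun s =>
        Sum.rec (motive := fun s => Ω → Sum.elim (fun _ => 𝒳 × ℝ) (fun _ => 𝒳) s)
          (fun i ω => (X i ω, Y i ω)) (fun j => Xt j) s) μ)
    (hident : ∀ i j, IdentDistrib (fun ω => (X i ω, Y i ω)) (fun ω => (X j ω, Y j ω)) μ μ)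
    (hidentt : ∀ j j', IdentDistrib (Xt j) (Xt j') μ μ)
    (hlaw : ∀ i x, (μ {ω | X i ω = x}).toReal = PR x)
    (hlawt : ∀ j x, (μ {ω | Xt j ω = x}).toReal = Pf0 x)
    (hY : ∀ i, Integrable (Y i) μ) (hY2 : ∀ i, Integrable (fun ω => (Y i ω) ^ 2) μ)
    (hcond_mean : ∀ i x, ∫ ω in {ω | X i ω = x}, Y i ω ∂μ = g x * PR x)
    (hcond_var : ∀ i x,
      ∫ ω in {ω | X i ω = x}, (Y i ω - g (X i ω)) ^ 2 ∂μ = σ2 x * PR x) :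
    (n : ℝ) *
      (((∫ ω, ((1 / (n : ℝ)) * ∑ i, (Pf (X i ω) / PR (X i ω)) * Y i ω) ^ 2 ∂μ)
          - (∫ ω, (1 / (n : ℝ)) * ∑ i, (Pf (X i ω) / PR (X i ω)) * Y i ω ∂μ) ^ 2)
        - ((∫ ω, ((1 / (n : ℝ)) * ∑ i, (Pf (X i ω) / PR (X i ω)) * (Y i ω - ghat (X i ω))
              + (1 / (m : ℝ)) * ∑ j, (Pf (Xt j ω) / Pf0 (Xt j ω)) * ghat (Xt j ω)) ^ 2 ∂μ)
          - (∫ ω, ((1 / (n : ℝ)) * ∑ i, (Pf (X i ω) / PR (X i ω)) * (Y i ω - ghat (X i ω))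
              + (1 / (m : ℝ)) * ∑ j, (Pf (Xt j ω) / Pf0 (Xt j ω)) * ghat (Xt j ω)) ∂μ) ^ 2))
      = ((∑ x, PR x * ((Pf x / PR x) * g x) ^ 2)
          - (∑ x, PR x * ((Pf x / PR x) * g x)) ^ 2)
        - ((∑ x, PR x * ((Pf x / PR x) * (g x - ghat x)) ^ 2)
          - (∑ x, PR x * ((Pf x / PR x) * (g x - ghat x))) ^ 2)
        - ((n : ℝ) / (m : ℝ)) *
          ((∑ x, Pf0 x * ((Pf x / Pf0 x) * ghat x) ^ 2)
            - (∑ x, Pf0 x * ((Pf x / Pf0 x) * ghat x)) ^ 2) := by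
  classical
  -- notation
  set w : 𝒳 → ℝ := fun x => Pf x / PR x with hw_def
  set u : 𝒳 → ℝ := fun x => Pf x / Pf0 x with hu_def
  have hw : ∀ x, Pf x / PR x = w x := fun _ => rfl
  have hu : ∀ x, Pf x / Pf0 x = u x := fun _ => rfl
  have hnR : (n : ℝ) ≠ 0 := Nat.cast_ne_zero.2 hn.ne'
  have hmR : (m : ℝ) ≠ 0 := Nat.cast_ne_zero.2 hm.ne'
  -- the set {ω | X i ω = x} is the fiber
  have hset : ∀ i (x : 𝒳), {ω | X i ω = x} = X i ⁻¹' {x} := fun i x => rfl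
  have hsett : ∀ j (x : 𝒳), {ω | Xt j ω = x} = Xt j ⁻¹' {x} := fun j x => rfl
  have hlaw' : ∀ i x, (μ (X i ⁻¹' {x})).toReal = PR x := fun i x => hlaw i x
  have hlawt' : ∀ j x, (μ (Xt j ⁻¹' {x})).toReal = Pf0 x := fun j x => hlawt j x
  -- conditional moments on fibers
  have hmean : ∀ i x, ∫ ω in X i ⁻¹' {x}, Y i ω ∂μ = g x * PR x := fun i x =>
    hcond_mean i x
  have hexpand : ∀ i x (c : ℝ), ∫ ω in X i ⁻¹' {x}, (Y i ω - c) ^ 2 ∂μ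
      = (∫ ω in X i ⁻¹' {x}, (Y i ω) ^ 2 ∂μ)
        - 2 * c * (∫ ω in X i ⁻¹' {x}, Y i ω ∂μ) + c ^ 2 * PR x := by
    intro i x c
    have i1 : Integrable (fun ω => 2 * c * Y i ω) (μ.restrict (X i ⁻¹' {x})) :=
      ((hY i).integrableOn).const_mul _
    have i2 : Integrable (fun ω => (Y i ω) ^ 2) (μ.restrict (X i ⁻¹' {x})) :=
      (hY2 i).integrableOn
    have i3 : Integrable (fun ω => (Y i ω) ^ 2 - 2 * c * Y i ω)
        (μ.restrict (X i ⁻¹' {x})) := i2.sub i1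
    have h1 : ∫ ω in X i ⁻¹' {x}, (Y i ω - c) ^ 2 ∂μ
        = ∫ ω in X i ⁻¹' {x}, ((Y i ω) ^ 2 - 2 * c * Y i ω + c ^ 2) ∂μ :=
      setIntegral_congr_fun ((hX i) (measurableSet_singleton x)) fun ω _ => by ring
    rw [h1, integral_add i3 (integrable_const _), integral_sub i2 i1,
      integral_const_mul, setIntegral_const, measureReal_def, smul_eq_mul, hlaw' i x, mul_comm (PR x)]
  have hsqY : ∀ i x, ∫ ω in X i ⁻¹' {x}, (Y i ω) ^ 2 ∂μ = (σ2 x + g x ^ 2) * PR x := by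
    intro i x
    have hv : ∫ ω in X i ⁻¹' {x}, (Y i ω - g x) ^ 2 ∂μ = σ2 x * PR x := by
      rw [aux_setIntegral_congr_comp (hX i) x (fun ω => (Y i ω - g x) ^ 2)
        (fun ω => (Y i ω - g (X i ω)) ^ 2) (fun ω hω => by simp only [hω])]
      exact hcond_var i x
    have hexp := hexpand i x (g x)
    rw [hv, hmean i x] at hexp
    linarith
  have hsqYc : ∀ i x, ∫ ω in X i ⁻¹' {x}, (Y i ω - ghat x) ^ 2 ∂μ
      = (σ2 x + (g x - ghat x) ^ 2) * PR x := by
    intro i x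
    have hexp := hexpand i x (ghat x)
    rw [hsqY i x, hmean i x] at hexp
    rw [hexp]; ring
  have hmeanYc : ∀ i x, ∫ ω in X i ⁻¹' {x}, (Y i ω - ghat x) ∂μ
      = (g x - ghat x) * PR x := by
    intro i x
    rw [integral_sub ((hY i).integrableOn) (integrable_const _), setIntegral_const,
      measureReal_def, smul_eq_mul, hlaw' i x, hmean i x]
    ring
  -- the constants
  set E1 : ℝ := ∑ x, w x * g x * PR x with hE1_def
  set E2 : ℝ := ∑ x, w x ^ 2 * (σ2 x + g x ^ 2) * PR x with hE2_def
  set A1 : ℝ := ∑ x, w x * (g x - ghat x) * PR x with hA1_def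
  set A2 : ℝ := ∑ x, w x ^ 2 * (σ2 x + (g x - ghat x) ^ 2) * PR x with hA2_def
  set B1 : ℝ := ∑ x, u x * ghat x * Pf0 x with hB1_def
  set B2 : ℝ := ∑ x, (u x * ghat x) ^ 2 * Pf0 x with hB2_def
  set S2 : ℝ := ∑ x, w x ^ 2 * σ2 x * PR x with hS2_def
  -- the two families of independent random variables
  set V : (Fin n ⊕ Fin m) → Ω → ℝ :=
    fun s => (Sum.rec (motive := fun s => Sum.elim (fun _ => 𝒳 × ℝ) (fun _ => 𝒳) s → ℝ)
        (fun _ p => ((1 : ℝ) / n * w p.1) * p.2) (fun _ _ => 0) s) ∘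
      (Sum.rec (motive := fun s => Ω → Sum.elim (fun _ => 𝒳 × ℝ) (fun _ => 𝒳) s)
        (fun i ω => (X i ω, Y i ω)) (fun j => Xt j) s) with hV_def
  set W : (Fin n ⊕ Fin m) → Ω → ℝ :=
    fun s => (Sum.rec (motive := fun s => Sum.elim (fun _ => 𝒳 × ℝ) (fun _ => 𝒳) s → ℝ)
        (fun _ p => ((1 : ℝ) / n * w p.1) * (p.2 - ghat p.1))
        (fun _ x => (1 : ℝ) / m * (u x * ghat x)) s) ∘
      (Sum.rec (motive := fun s => Ω → Sum.elim (fun _ => 𝒳 × ℝ) (fun _ => 𝒳) s)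
        (fun i ω => (X i ω, Y i ω)) (fun j => Xt j) s) with hW_def
  have hVl : ∀ i, V (Sum.inl i) = fun ω => ((1 : ℝ) / n * w (X i ω)) * Y i ω :=
    fun i => rfl
  have hVr : ∀ j, V (Sum.inr j) = fun _ => (0 : ℝ) := fun j => rfl
  have hWl : ∀ i, W (Sum.inl i)
      = fun ω => ((1 : ℝ) / n * w (X i ω)) * (Y i ω - ghat (X i ω)) := fun i => rfl
  have hWr : ∀ j, W (Sum.inr j)
      = fun ω => (1 : ℝ) / m * (u (Xt j ω) * ghat (Xt j ω)) := fun j => rfl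
  -- independence
  have hVindep : iIndepFun (m := fun _ => (inferInstance : MeasurableSpace ℝ)) V μ := by
    refine hindep.comp _ ?_
    rintro (i | j)
    · exact ((measurable_of_countable (fun x : 𝒳 => (1 : ℝ) / n * w x)).comp
        measurable_fst).mul measurable_snd
    · exact measurable_const
  have hWindep : iIndepFun (m := fun _ => (inferInstance : MeasurableSpace ℝ)) W μ := by
    refine hindep.comp _ ?_
    rintro (i | j)
    · exact (((measurable_of_countable (fun x : 𝒳 => (1 : ℝ) / n * w x)).comp
        measurable_fst).mul (measurable_snd.sub
          ((measurable_of_countable ghat).comp measurable_fst)))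
    · exact measurable_of_countable (fun x : 𝒳 => (1 : ℝ) / m * (u x * ghat x))
  -- square-integrability
  have hYghat2 : ∀ i, Integrable (fun ω => (Y i ω - ghat (X i ω)) ^ 2) μ := by
    intro i
    have h1 : MemLp (Y i) 2 μ :=
      (memLp_two_iff_integrable_sq (hYmeas i).aestronglyMeasurable).2 (hY2 i)
    obtain ⟨C, hC⟩ := Finite.exists_le fun x => |ghat x|
    have h2 : MemLp (fun ω => ghat (X i ω)) 2 μ :=
      aux_memLp_two_of_bound ((measurable_of_countable ghat).comp (hX i)) C
        (fun ω => hC (X i ω))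
    have h3 : MemLp (fun ω => Y i ω - ghat (X i ω)) 2 μ := h1.sub h2
    exact (memLp_two_iff_integrable_sq
      ((hYmeas i).sub ((measurable_of_countable ghat).comp (hX i))).aestronglyMeasurable).1 h3
  have hVmem : ∀ s, MemLp (V s) 2 μ := by
    rintro (i | j)
    · rw [hVl i]
      obtain ⟨C, hC⟩ := Finite.exists_le fun x => |(1 : ℝ) / n * w x|
      exact aux_memLp_mul
        ((measurable_of_countable (fun x : 𝒳 => (1 : ℝ) / n * w x)).comp (hX i))
        (hYmeas i) C (fun ω => hC (X i ω)) (hY2 i)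
    · rw [hVr j]
      exact aux_memLp_two_of_bound measurable_const 0 (fun ω => by simp)
  have hWmem : ∀ s, MemLp (W s) 2 μ := by
    rintro (i | j)
    · rw [hWl i]
      obtain ⟨C, hC⟩ := Finite.exists_le fun x => |(1 : ℝ) / n * w x|
      exact aux_memLp_mul
        ((measurable_of_countable (fun x : 𝒳 => (1 : ℝ) / n * w x)).comp (hX i))
        ((hYmeas i).sub ((measurable_of_countable ghat).comp (hX i))) C
        (fun ω => hC (X i ω)) (hYghat2 i)
    · rw [hWr j]
      obtain ⟨C, hC⟩ := Finite.exists_le fun x => |(1 : ℝ) / m * (u x * ghat x)|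
      exact aux_memLp_two_of_bound
        ((measurable_of_countable (fun x => (1 : ℝ) / m * (u x * ghat x))).comp (hXt j)) C
        (fun ω => hC (Xt j ω))
  -- first moments
  have hVint1 : ∀ i, ∫ ω, V (Sum.inl i) ω ∂μ = 1 / n * E1 := by
    intro i
    rw [hVl i, aux_split (hX i) (fun x => (1 : ℝ) / n * w x) (Y i)
        (by rw [← hVl i]; exact (hVmem (Sum.inl i)).integrable one_le_two)]
    simp only [hmean]
    rw [hE1_def, mul_sum]
    exact sum_congr rfl fun x _ => by ring
  have hWint1l : ∀ i, ∫ ω, W (Sum.inl i) ω ∂μ = 1 / n * A1 := by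
    intro i
    have h1 : ∀ ω, W (Sum.inl i) ω
        = (fun x => (1 : ℝ) / n * w x) (X i ω) * (Y i ω - ghat (X i ω)) := fun ω => rfl
    have h2 : ∫ ω, W (Sum.inl i) ω ∂μ
        = ∑ x, ((1 : ℝ) / n * w x) * ∫ ω in X i ⁻¹' {x}, (Y i ω - ghat (X i ω)) ∂μ := by
      rw [hWl i]
      exact aux_split (hX i) (fun x => (1 : ℝ) / n * w x)
        (fun ω => Y i ω - ghat (X i ω))
        (by rw [← hWl i]; exact (hWmem (Sum.inl i)).integrable one_le_two)
    rw [h2]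
    have h3 : ∀ x : 𝒳, ∫ ω in X i ⁻¹' {x}, (Y i ω - ghat (X i ω)) ∂μ
        = (g x - ghat x) * PR x := by
      intro x
      rw [aux_setIntegral_congr_comp (hX i) x (fun ω => Y i ω - ghat (X i ω))
        (fun ω => Y i ω - ghat x) (fun ω hω => by simp only [hω])]
      exact hmeanYc i x
    simp only [h3]
    rw [hA1_def, mul_sum]
    exact sum_congr rfl fun x _ => by ring
  have hWint1r : ∀ j, ∫ ω, W (Sum.inr j) ω ∂μ = 1 / m * B1 := by
    intro j
    rw [hWr j, aux_split_comp (hXt j) (fun x => (1 : ℝ) / m * (u x * ghat x)) Pf0 (hlawt' j)]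
    rw [hB1_def, mul_sum]
    exact sum_congr rfl fun x _ => by ring
  -- second moments
  have hVint2 : ∀ i, ∫ ω, (V (Sum.inl i) ω) ^ 2 ∂μ = (1 / n) ^ 2 * E2 := by
    intro i
    have h1 : ∀ ω, (V (Sum.inl i) ω) ^ 2
        = (fun x => ((1 : ℝ) / n * w x) ^ 2) (X i ω) * (Y i ω) ^ 2 := fun ω => by
      rw [hVl i]; ring
    have hint : Integrable (fun ω =>
        (fun x => ((1 : ℝ) / n * w x) ^ 2) (X i ω) * (Y i ω) ^ 2) μ := by
      have := (memLp_two_iff_integrable_sq (hVmem (Sum.inl i)).1).1 (hVmem (Sum.inl i))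
      simpa only [h1] using this
    calc ∫ ω, (V (Sum.inl i) ω) ^ 2 ∂μ
        = ∫ ω, (fun x => ((1 : ℝ) / n * w x) ^ 2) (X i ω) * (Y i ω) ^ 2 ∂μ := by
          simp only [h1]
      _ = ∑ x, ((1 : ℝ) / n * w x) ^ 2 * ∫ ω in X i ⁻¹' {x}, (Y i ω) ^ 2 ∂μ :=
          aux_split (hX i) (fun x => ((1 : ℝ) / n * w x) ^ 2)
            (fun ω => (Y i ω) ^ 2) hint
      _ = (1 / n) ^ 2 * E2 := by
          simp only [hsqY]
          rw [hE2_def, mul_sum]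
          exact sum_congr rfl fun x _ => by ring
  have hWint2l : ∀ i, ∫ ω, (W (Sum.inl i) ω) ^ 2 ∂μ = (1 / n) ^ 2 * A2 := by
    intro i
    have h1 : ∀ ω, (W (Sum.inl i) ω) ^ 2
        = (fun x => ((1 : ℝ) / n * w x) ^ 2) (X i ω) * (Y i ω - ghat (X i ω)) ^ 2 :=
      fun ω => by rw [hWl i]; ring
    have hint : Integrable (fun ω =>
        (fun x => ((1 : ℝ) / n * w x) ^ 2) (X i ω) * (Y i ω - ghat (X i ω)) ^ 2) μ := by
      have := (memLp_two_iff_integrable_sq (hWmem (Sum.inl i)).1).1 (hWmem (Sum.inl i))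
      simpa only [h1] using this
    have h3 : ∀ x : 𝒳, ∫ ω in X i ⁻¹' {x}, (Y i ω - ghat (X i ω)) ^ 2 ∂μ
        = (σ2 x + (g x - ghat x) ^ 2) * PR x := by
      intro x
      rw [aux_setIntegral_congr_comp (hX i) x (fun ω => (Y i ω - ghat (X i ω)) ^ 2)
        (fun ω => (Y i ω - ghat x) ^ 2) (fun ω hω => by simp only [hω])]
      exact hsqYc i x
    calc ∫ ω, (W (Sum.inl i) ω) ^ 2 ∂μ
        = ∫ ω, (fun x => ((1 : ℝ) / n * w x) ^ 2) (X i ω) * (Y i ω - ghat (X i ω)) ^ 2 ∂μ := by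
          simp only [h1]
      _ = ∑ x, ((1 : ℝ) / n * w x) ^ 2
            * ∫ ω in X i ⁻¹' {x}, (Y i ω - ghat (X i ω)) ^ 2 ∂μ :=
          aux_split (hX i) (fun x => ((1 : ℝ) / n * w x) ^ 2)
            (fun ω => (Y i ω - ghat (X i ω)) ^ 2) hint
      _ = (1 / n) ^ 2 * A2 := by
          simp only [h3]
          rw [hA2_def, mul_sum]
          exact sum_congr rfl fun x _ => by ring
  have hWint2r : ∀ j, ∫ ω, (W (Sum.inr j) ω) ^ 2 ∂μ = (1 / m) ^ 2 * B2 := by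
    intro j
    have h1 : ∀ ω, (W (Sum.inr j) ω) ^ 2
        = (fun x => ((1 : ℝ) / m * (u x * ghat x)) ^ 2) (Xt j ω) := fun ω => by
      rw [hWr j]
    calc ∫ ω, (W (Sum.inr j) ω) ^ 2 ∂μ
        = ∫ ω, (fun x => ((1 : ℝ) / m * (u x * ghat x)) ^ 2) (Xt j ω) ∂μ := by
          simp only [h1]
      _ = ∑ x, ((1 : ℝ) / m * (u x * ghat x)) ^ 2 * Pf0 x :=
          aux_split_comp (hXt j) (fun x => ((1 : ℝ) / m * (u x * ghat x)) ^ 2)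
            Pf0 (hlawt' j)
      _ = (1 / m) ^ 2 * B2 := by
          rw [hB2_def, mul_sum]
          exact sum_congr rfl fun x _ => by ring
  -- variances of individual terms
  have hVvar : ∀ s, variance (V s) μ
      = Sum.elim (fun _ : Fin n => (1 / n) ^ 2 * E2 - (1 / n * E1) ^ 2)
          (fun _ : Fin m => (0 : ℝ)) s := by
    rintro (i | j)
    · rw [variance_eq_sub (hVmem (Sum.inl i))]
      simp only [Pi.pow_apply, Sum.elim_inl]
      rw [show ∫ ω, V (Sum.inl i) ω ^ 2 ∂μ = (1 / n) ^ 2 * E2 from hVint2 i, hVint1 i]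
    · simp only [Sum.elim_inr, hVr j]
      exact variance_zero μ
  have hWvar : ∀ s, variance (W s) μ
      = Sum.elim (fun _ : Fin n => (1 / n) ^ 2 * A2 - (1 / n * A1) ^ 2)
          (fun _ : Fin m => (1 / m) ^ 2 * B2 - (1 / m * B1) ^ 2) s := by
    rintro (i | j)
    · rw [variance_eq_sub (hWmem (Sum.inl i))]
      simp only [Pi.pow_apply, Sum.elim_inl]
      rw [show ∫ ω, W (Sum.inl i) ω ^ 2 ∂μ = (1 / n) ^ 2 * A2 from hWint2l i, hWint1l i]
    · rw [variance_eq_sub (hWmem (Sum.inr j))]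
      simp only [Pi.pow_apply, Sum.elim_inr]
      rw [show ∫ ω, W (Sum.inr j) ω ^ 2 ∂μ = (1 / m) ^ 2 * B2 from hWint2r j, hWint1r j]
  -- variance of the sums
  have hVsum : variance (∑ s, V s) μ
      = (n : ℝ) * ((1 / n) ^ 2 * E2 - (1 / n * E1) ^ 2) := by
    rw [IndepFun.variance_sum (fun s _ => hVmem s)
      (fun s _ t _ hst => hVindep.indepFun hst)]
    simp only [hVvar]
    rw [Fintype.sum_sum_type]
    simp [mul_comm]
    ring
  have hWsum : variance (∑ s, W s) μ
      = (n : ℝ) * ((1 / n) ^ 2 * A2 - (1 / n * A1) ^ 2)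
        + (m : ℝ) * ((1 / m) ^ 2 * B2 - (1 / m * B1) ^ 2) := by
    rw [IndepFun.variance_sum (fun s _ => hWmem s)
      (fun s _ t _ hst => hWindep.indepFun hst)]
    simp only [hWvar]
    rw [Fintype.sum_sum_type]
    simp [mul_comm]
    ring
  -- identify the estimators with the sums
  have hVtot : ∀ ω, (∑ s, V s) ω
      = (1 / (n : ℝ)) * ∑ i, w (X i ω) * Y i ω := by
    intro ω
    rw [Finset.sum_apply, Fintype.sum_sum_type]
    simp only [hVl, hVr]
    rw [mul_sum]
    simp only [Finset.sum_const_zero, add_zero]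
    exact sum_congr rfl fun i _ => by ring
  have hWtot : ∀ ω, (∑ s, W s) ω
      = (1 / (n : ℝ)) * ∑ i, w (X i ω) * (Y i ω - ghat (X i ω))
        + (1 / (m : ℝ)) * ∑ j, u (Xt j ω) * ghat (Xt j ω) := by
    intro ω
    rw [Finset.sum_apply, Fintype.sum_sum_type]
    simp only [hWl, hWr]
    rw [mul_sum, mul_sum]
    congr 1
    all_goals exact sum_congr rfl fun _ _ => by ring
  -- express the left-hand side via the variances
  have hkey1 : (∫ ω, ((1 / (n : ℝ)) * ∑ i, w (X i ω) * Y i ω) ^ 2 ∂μ)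
      - (∫ ω, (1 / (n : ℝ)) * ∑ i, w (X i ω) * Y i ω ∂μ) ^ 2
      = variance (∑ s, V s) μ := by
    rw [variance_eq_sub (memLp_finset_sum' _ fun s _ => hVmem s)]
    simp only [Pi.pow_apply, hVtot]
  have hkey2 : (∫ ω, ((1 / (n : ℝ)) * ∑ i, w (X i ω) * (Y i ω - ghat (X i ω))
        + (1 / (m : ℝ)) * ∑ j, u (Xt j ω) * ghat (Xt j ω)) ^ 2 ∂μ)
      - (∫ ω, ((1 / (n : ℝ)) * ∑ i, w (X i ω) * (Y i ω - ghat (X i ω))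
        + (1 / (m : ℝ)) * ∑ j, u (Xt j ω) * ghat (Xt j ω)) ∂μ) ^ 2
      = variance (∑ s, W s) μ := by
    rw [variance_eq_sub (memLp_finset_sum' _ fun s _ => hWmem s)]
    simp only [Pi.pow_apply, hWtot]
  -- rewrite the goal
  simp only [hw, hu]
  rw [hkey1, hkey2, hVsum, hWsum]
  -- identities between the sums on the right-hand side and the constants
  have hR1 : (∑ x, PR x * (w x * g x) ^ 2) + S2 = E2 := by
    rw [hE2_def, hS2_def, ← sum_add_distrib]
    exact sum_congr rfl fun x _ => by ring
  have hR2 : (∑ x, PR x * (w x * (g x - ghat x)) ^ 2) + S2 = A2 := by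
    rw [hA2_def, hS2_def, ← sum_add_distrib]
    exact sum_congr rfl fun x _ => by ring
  have hR3 : (∑ x, PR x * (w x * g x)) = E1 := by
    rw [hE1_def]; exact sum_congr rfl fun x _ => by ring
  have hR4 : (∑ x, PR x * (w x * (g x - ghat x))) = A1 := by
    rw [hA1_def]; exact sum_congr rfl fun x _ => by ring
  have hR5 : (∑ x, Pf0 x * (u x * ghat x) ^ 2) = B2 := by
    rw [hB2_def]; exact sum_congr rfl fun x _ => by ring
  have hR6 : (∑ x, Pf0 x * (u x * ghat x)) = B1 := by
    rw [hB1_def]; exact sum_congr rfl fun x _ => by ring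
  rw [← hR1, ← hR2, hR3, hR4, hR5, hR6]
  field_simp
  ring
end
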